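/- Let p be a prime and let (A,+,·) be a pre-Lie algebra over F_p generated as a pre-Lie algebra by one element x. Suppose A has cardinality p^4, A^6 = 0 and A^4 ≠ 0. Then A^3·A^2 = 0, A^4·A = 0, A·A^4 = 0, and x^2·(x·x^2) = 0, where x^2 = x·x. -/
import Mathlib


/-- A pre-Lie algebra structure over `ZMod p` on the `ZMod p`-module `A`:
a bilinear multiplication satisfying the pre-Lie identity. -/
structure PreLie (p : ℕ) (A : Type) [AddCommGroup A] [Module (ZMod p) A] where
  mul : A → A → A
  add_mul : ∀ a b c, mul (a + b) c = mul a c + mul b c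
  mul_add : ∀ a b c, mul a (b + c) = mul a b + mul a c
  smul_mul : ∀ (r : ZMod p) (a b : A), mul (r • a) b = r • mul a b
  mul_smul : ∀ (r : ZMod p) (a b : A), mul a (r • b) = r • mul a b
  prelie : ∀ a b c, mul (mul a b) c - mul a (mul b c) = mul (mul b a) c - mul b (mul a c)

/-- `IsProd m n x` : `x` is a product (in some order, with some bracketing) of
`n` elements of `A` under the multiplication `m`. -/
inductive IsProd {A : Type} (m : A → A → A) : ℕ → A → Prop
  | of (a : A) : IsProd m 1 a
  | mul {j k : ℕ} {x y : A} : IsProd m j x → IsProd m k y → IsProd m (j + k) (m x y)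

/-- `IsXProd m x n w` : `w` is a product (with some bracketing) of `n` copies of `x`. -/
inductive IsXProd {A : Type} (m : A → A → A) (x : A) : ℕ → A → Prop
  | of : IsXProd m x 1 x
  | mul {j k : ℕ} {w v : A} : IsXProd m x j w → IsXProd m x k v → IsXProd m x (j + k) (m w v)

variable {A : Type} [AddCommGroup A]

/-- The span chain `Aⁿ` of a pre-Lie multiplication (`pchain p m n = Aⁿ` for `n ≥ 1`):
`A¹ = A`, `A^{i+1} = Σ_{j=1}^{i} A^j · A^{i+1-j}` (linear span). -/
def pchain (p : ℕ) [Module (ZMod p) A] (m : A → A → A) : ℕ → Submodule (ZMod p) A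
  | 0 => ⊤
  | 1 => ⊤
  | n + 2 => Submodule.span (ZMod p)
      {x | ∃ j : Fin (n + 1), ∃ u ∈ pchain p m (j.1 + 1), ∃ v ∈ pchain p m (n + 1 - j.1),
        x = m u v}

/-- `e^{L_a}(b) = Σ_{n=0}^{k-1} (1/n!) L_a^n(b)`, where `L_a(y) = a · y`. -/
def expL (p : ℕ) [Module (ZMod p) A] (m : A → A → A) (k : ℕ) (a b : A) : A :=
  ∑ n ∈ Finset.range k, ((Nat.factorial n : ZMod p))⁻¹ • ((fun y => m a y)^[n] b)

/-- `W(a) = a + Σ_{n=2}^{k} (1/n!) L_a^{n-1}(a)`. -/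
def Wmap (p : ℕ) [Module (ZMod p) A] (m : A → A → A) (k : ℕ) (a : A) : A :=
  a + ∑ n ∈ Finset.range (k - 1),
      ((Nat.factorial (n + 2) : ZMod p))⁻¹ • ((fun y => m a y)^[n + 1] a)

/-- The group-of-flows multiplication `a ∘ b = a + e^{L_{Ω(a)}}(b)`, where `Ω`
is the inverse of the bijection `W`. -/
noncomputable def flowCirc (p : ℕ) [Module (ZMod p) A] (m : A → A → A) (k : ℕ) (a b : A) : A :=
  a + expL p m k (@Function.invFun A A ⟨0⟩ (Wmap p m k) a) b

/-- Membership in the smallest sub-pre-Lie-algebra containing `x`. -/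
inductive PreLieGen (p : ℕ) [Module (ZMod p) A] (m : A → A → A) (x : A) : A → Prop
  | base : PreLieGen p m x x
  | zero : PreLieGen p m x 0
  | add {a b : A} : PreLieGen p m x a → PreLieGen p m x b → PreLieGen p m x (a + b)
  | neg {a : A} : PreLieGen p m x a → PreLieGen p m x (-a)
  | smul (r : ZMod p) {a : A} : PreLieGen p m x a → PreLieGen p m x (r • a)
  | mul {a b : A} : PreLieGen p m x a → PreLieGen p m x b → PreLieGen p m x (m a b)

section AuxPL

variable {p : ℕ} [Module (ZMod p) A]

theorem pchain_zero (m : A → A → A) : pchain p m 0 = ⊤ := by rw [pchain]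

theorem pchain_one (m : A → A → A) : pchain p m 1 = ⊤ := by rw [pchain]

theorem pchain_succ_succ (m : A → A → A) (n : ℕ) :
    pchain p m (n + 2) = Submodule.span (ZMod p)
      {y | ∃ j : Fin (n + 1), ∃ u ∈ pchain p m (j.1 + 1), ∃ v ∈ pchain p m (n + 1 - j.1),
        y = m u v} := by rw [pchain]

theorem pchain_two (m : A → A → A) :
    pchain p m 2 = Submodule.span (ZMod p)
      {y | ∃ j : Fin 1, ∃ u ∈ pchain p m (j.1 + 1), ∃ v ∈ pchain p m (1 - j.1),
        y = m u v} := pchain_succ_succ m 0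

theorem pchain_three (m : A → A → A) :
    pchain p m 3 = Submodule.span (ZMod p)
      {y | ∃ j : Fin 2, ∃ u ∈ pchain p m (j.1 + 1), ∃ v ∈ pchain p m (2 - j.1),
        y = m u v} := pchain_succ_succ m 1

theorem pchain_four (m : A → A → A) :
    pchain p m 4 = Submodule.span (ZMod p)
      {y | ∃ j : Fin 3, ∃ u ∈ pchain p m (j.1 + 1), ∃ v ∈ pchain p m (3 - j.1),
        y = m u v} := pchain_succ_succ m 2

theorem pchain_five (m : A → A → A) :
    pchain p m 5 = Submodule.span (ZMod p)
      {y | ∃ j : Fin 4, ∃ u ∈ pchain p m (j.1 + 1), ∃ v ∈ pchain p m (4 - j.1),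
        y = m u v} := pchain_succ_succ m 3

theorem mem_pchain_one (m : A → A → A) (y : A) : y ∈ pchain p m 1 := by
  rw [pchain_one]; exact Submodule.mem_top

theorem pmul_mem (m : A → A → A) {i j : ℕ} {u v : A}
    (hu : u ∈ pchain p m (i + 1)) (hv : v ∈ pchain p m (j + 1)) :
    m u v ∈ pchain p m (i + j + 2) := by
  rw [pchain_succ_succ]
  apply Submodule.subset_span
  refine ⟨⟨i, by omega⟩, u, hu, v, ?_, rfl⟩
  have e : i + j + 1 - i = j + 1 := by omega
  rw [e]
  exact hv

theorem pchain_succ_le (m : A → A → A) : ∀ n : ℕ, pchain p m (n + 1) ≤ pchain p m n := by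
  intro n
  induction n using Nat.strong_induction_on with
  | _ n ih =>
    match n, ih with
    | 0, _ => rw [pchain_zero]; exact le_top
    | 1, _ => rw [pchain_one]; exact le_top
    | (k + 2), ih =>
      show pchain p m ((k + 1) + 2) ≤ pchain p m (k + 2)
      rw [pchain_succ_succ m (k + 1), pchain_succ_succ m k, Submodule.span_le]
      rintro y ⟨j, u, hu, v, hv, rfl⟩
      rcases Nat.lt_or_ge j.1 (k + 1) with hj | hj
      · refine Submodule.subset_span (⟨⟨j.1, hj⟩, u, hu, v, ?_, rfl⟩ :
          _ ∈ {y | ∃ j : Fin (k + 1), ∃ u ∈ pchain p m (j.1 + 1),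
            ∃ v ∈ pchain p m (k + 1 - j.1), y = m u v})
        have e : k + 2 - j.1 = (k + 1 - j.1) + 1 := by omega
        rw [e] at hv
        exact ih (k + 1 - j.1) (by omega) hv
      · have hj1 : j.1 = k + 1 := by omega
        refine Submodule.subset_span (⟨⟨k, by omega⟩, u, ?_, v, ?_, rfl⟩ :
          _ ∈ {y | ∃ j : Fin (k + 1), ∃ u ∈ pchain p m (j.1 + 1),
            ∃ v ∈ pchain p m (k + 1 - j.1), y = m u v})
        · rw [hj1] at hu
          exact ih (k + 1) (by omega) hu
        · have e : k + 1 - k = 1 := by omega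
          rw [e]
          exact mem_pchain_one m v

end AuxPL

/-- a one-generated pre-Lie algebra over `F_p` of cardinality
`p^4` with `A^6 = 0` and `A^4 ≠ 0` satisfies `A^3·A^2 = 0`, `A^4·A = 0`,
`A·A^4 = 0` and `x^2·(x·x^2) = 0`. -/
theorem oneGenerated_preLie_card_pow_four_A6_zero {p : ℕ} (hp : p.Prime)
    [Module (ZMod p) A] (L : PreLie p A) (x : A)
    (hgen : ∀ a : A, PreLieGen p L.mul x a)
    (hcard : Nat.card A = p ^ 4)
    (h6 : pchain p L.mul 6 = ⊥) (h4 : pchain p L.mul 4 ≠ ⊥) :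
    (∀ u ∈ pchain p L.mul 3, ∀ v ∈ pchain p L.mul 2, L.mul u v = 0) ∧
    (∀ u ∈ pchain p L.mul 4, ∀ v : A, L.mul u v = 0) ∧
    (∀ u : A, ∀ v ∈ pchain p L.mul 4, L.mul u v = 0) ∧
    L.mul (L.mul x x) (L.mul x (L.mul x x)) = 0 := by
  haveI : Fact p.Prime := ⟨hp⟩
  have z6 : ∀ {y : A}, y ∈ pchain p L.mul 6 → y = 0 := by
    intro y hy
    rw [h6, Submodule.mem_bot] at hy
    exact hy
  -- decomposition of A as span{x} + A^2
  have D1 : ∀ y : A, ∃ r : ZMod p, ∃ c, c ∈ pchain p L.mul 2 ∧ y = r • x + c := by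
    intro y
    induction hgen y with
    | base => exact ⟨1, 0, Submodule.zero_mem _, by simp⟩
    | zero => exact ⟨0, 0, Submodule.zero_mem _, by simp⟩
    | @add a b _ _ iha ihb =>
      obtain ⟨r1, c1, hc1, rfl⟩ := iha
      obtain ⟨r2, c2, hc2, rfl⟩ := ihb
      exact ⟨r1 + r2, c1 + c2, Submodule.add_mem _ hc1 hc2, by rw [add_smul]; abel⟩
    | @neg a _ iha =>
      obtain ⟨r1, c1, hc1, rfl⟩ := iha
      exact ⟨-r1, -c1, Submodule.neg_mem _ hc1, by rw [neg_smul]; abel⟩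
    | @smul r a _ iha =>
      obtain ⟨r1, c1, hc1, rfl⟩ := iha
      exact ⟨r * r1, r • c1, Submodule.smul_mem _ _ hc1, by rw [smul_add, smul_smul]⟩
    | @mul a b _ _ _ _ =>
      exact ⟨0, L.mul a b,
        pmul_mem L.mul (mem_pchain_one L.mul a) (mem_pchain_one L.mul b), by simp⟩
  -- decomposition of A^2 as span{x²} + A^3
  have D2 : ∀ y ∈ pchain p L.mul 2, ∃ s : ZMod p, ∃ c, c ∈ pchain p L.mul 3 ∧
      y = s • (L.mul x x) + c := by
    intro y hy
    rw [pchain_two] at hy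
    induction hy using Submodule.span_induction with
    | mem z hz =>
      obtain ⟨j, u, hu, v, hv, rfl⟩ := hz
      obtain ⟨r, u', hu', rfl⟩ := D1 u
      obtain ⟨s, v', hv', rfl⟩ := D1 v
      refine ⟨r * s, r • L.mul x v' + (s • L.mul u' x + L.mul u' v'), ?_, ?_⟩
      · exact Submodule.add_mem _
          (Submodule.smul_mem _ _ (pmul_mem (i := 0) (j := 1) L.mul (mem_pchain_one L.mul x) hv'))
          (Submodule.add_mem _
            (Submodule.smul_mem _ _ (pmul_mem (i := 1) (j := 0) L.mul hu' (mem_pchain_one L.mul x)))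
            (pmul_mem (i := 0) (j := 1) L.mul (mem_pchain_one L.mul u') hv'))
      · rw [L.add_mul, L.mul_add, L.mul_add, L.smul_mul, L.smul_mul, L.mul_smul, L.mul_smul,
          smul_smul]
        abel
    | zero => exact ⟨0, 0, Submodule.zero_mem _, by simp⟩
    | add u _ v _ ihu ihv =>
      obtain ⟨s1, c1, hc1, rfl⟩ := ihu
      obtain ⟨s2, c2, hc2, rfl⟩ := ihv
      exact ⟨s1 + s2, c1 + c2, Submodule.add_mem _ hc1 hc2, by rw [add_smul]; abel⟩
    | smul r u _ ihu =>
      obtain ⟨s1, c1, hc1, rfl⟩ := ihu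
      exact ⟨r * s1, r • c1, Submodule.smul_mem _ _ hc1, by rw [smul_add, smul_smul]⟩
  -- A² ≠ ⊤
  have h2top : pchain p L.mul 2 ≠ ⊤ := by
    intro h2
    have hall : ∀ n : ℕ, pchain p L.mul (n + 2) = ⊤ := by
      intro n
      induction n with
      | zero => exact h2
      | succ k ihk =>
        rw [eq_top_iff, ← h2, pchain_two, Submodule.span_le]
        rintro y ⟨j, u, _, v, _, rfl⟩
        have hu2 : u ∈ pchain p L.mul ((k + 1) + 1) := by
          show u ∈ pchain p L.mul (k + 2)
          rw [ihk]
          exact Submodule.mem_top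
        exact pmul_mem (i := k + 1) (j := 0) L.mul hu2 (mem_pchain_one L.mul v)
    obtain ⟨y, hy4, hy0⟩ := (Submodule.ne_bot_iff _).1 h4
    have htb : (⊤ : Submodule (ZMod p) A) = ⊥ := (hall 4).symm.trans h6
    exact hy0 (by rw [← Submodule.mem_bot (R := ZMod p), ← htb]; exact Submodule.mem_top)
  -- A³ ≠ A²
  have hne32 : pchain p L.mul 3 ≠ pchain p L.mul 2 := by
    intro heq
    have le34 : pchain p L.mul 3 ≤ pchain p L.mul 4 := by
      rw [pchain_three, Submodule.span_le]
      rintro y ⟨j, u, hu, v, hv, rfl⟩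
      rcases j with ⟨jv, hj⟩
      interval_cases jv
      · have hv' : v ∈ pchain p L.mul 3 := by rw [heq]; exact hv
        exact pmul_mem (i := 0) (j := 2) L.mul hu hv'
      · have hu' : u ∈ pchain p L.mul 3 := by rw [heq]; exact hu
        exact pmul_mem (i := 2) (j := 0) L.mul hu' hv
    have le45 : pchain p L.mul 4 ≤ pchain p L.mul 5 := by
      rw [pchain_four, Submodule.span_le]
      rintro y ⟨j, u, hu, v, hv, rfl⟩
      rcases j with ⟨jv, hj⟩
      interval_cases jv
      · exact pmul_mem (i := 0) (j := 3) L.mul hu (le34 hv)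
      · have hu' : u ∈ pchain p L.mul 3 := by rw [heq]; exact hu
        exact pmul_mem (i := 2) (j := 1) L.mul hu' hv
      · exact pmul_mem (i := 3) (j := 0) L.mul (le34 hu) hv
    have le56 : pchain p L.mul 5 ≤ pchain p L.mul 6 := by
      rw [pchain_five, Submodule.span_le]
      rintro y ⟨j, u, hu, v, hv, rfl⟩
      rcases j with ⟨jv, hj⟩
      interval_cases jv
      · exact pmul_mem (i := 0) (j := 4) L.mul hu (le45 hv)
      · have hu' : u ∈ pchain p L.mul 3 := by rw [heq]; exact hu
        exact pmul_mem (i := 2) (j := 2) L.mul hu' hv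
      · exact pmul_mem (i := 3) (j := 1) L.mul (le34 hu) hv
      · exact pmul_mem (i := 4) (j := 0) L.mul (le45 hu) hv
    exact h4 (le_bot_iff.1 (le45.trans (le56.trans h6.le)))
  -- A⁴ ≠ A³
  have hx2 : L.mul x x ∈ pchain p L.mul 2 :=
    pmul_mem (i := 0) (j := 0) L.mul (mem_pchain_one L.mul x) (mem_pchain_one L.mul x)
  have ha3 : L.mul x (L.mul x x) ∈ pchain p L.mul 3 :=
    pmul_mem (i := 0) (j := 1) L.mul (mem_pchain_one L.mul x) hx2
  have hb3 : L.mul (L.mul x x) x ∈ pchain p L.mul 3 :=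
    pmul_mem (i := 1) (j := 0) L.mul hx2 (mem_pchain_one L.mul x)
  have hne43 : pchain p L.mul 4 ≠ pchain p L.mul 3 := by
    intro heq
    have ha4 : L.mul x (L.mul x x) ∈ pchain p L.mul 4 := by rw [heq]; exact ha3
    have hb4 : L.mul (L.mul x x) x ∈ pchain p L.mul 4 := by rw [heq]; exact hb3
    have e := L.prelie x (L.mul x x) x
    have hc : L.mul (L.mul x x) (L.mul x x) =
        L.mul (L.mul (L.mul x x) x) x -
          (L.mul (L.mul x (L.mul x x)) x - L.mul x (L.mul (L.mul x x) x)) := by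
      rw [e]; abel
    have hc5 : L.mul (L.mul x x) (L.mul x x) ∈ pchain p L.mul 5 := by
      rw [hc]
      exact Submodule.sub_mem _
        (pmul_mem (i := 3) (j := 0) L.mul hb4 (mem_pchain_one L.mul x))
        (Submodule.sub_mem _
          (pmul_mem (i := 3) (j := 0) L.mul ha4 (mem_pchain_one L.mul x))
          (pmul_mem (i := 0) (j := 3) L.mul (mem_pchain_one L.mul x) hb4))
    have le45 : pchain p L.mul 4 ≤ pchain p L.mul 5 := by
      rw [pchain_four, Submodule.span_le]
      rintro y ⟨j, u, hu, v, hv, rfl⟩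
      rcases j with ⟨jv, hj⟩
      interval_cases jv
      · have hv' : v ∈ pchain p L.mul 4 := by rw [heq]; exact hv
        exact pmul_mem (i := 0) (j := 3) L.mul hu hv'
      · obtain ⟨r, u3, hu3, rfl⟩ := D2 u hu
        obtain ⟨s, v3, hv3, rfl⟩ := D2 v hv
        have expand : L.mul (r • L.mul x x + u3) (s • L.mul x x + v3) =
            (r * s) • L.mul (L.mul x x) (L.mul x x) +
              (r • L.mul (L.mul x x) v3 + (s • L.mul u3 (L.mul x x) + L.mul u3 v3)) := by
          rw [L.add_mul, L.mul_add, L.mul_add, L.smul_mul, L.smul_mul, L.mul_smul, L.mul_smul,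
            smul_smul]
          abel
        rw [expand]
        refine Submodule.add_mem _ (Submodule.smul_mem _ _ hc5) (Submodule.add_mem _
          (Submodule.smul_mem _ _ (pmul_mem (i := 1) (j := 2) L.mul hx2 hv3))
          (Submodule.add_mem _
            (Submodule.smul_mem _ _ (pmul_mem (i := 2) (j := 1) L.mul hu3 hx2))
            (pchain_succ_le L.mul 5 (pmul_mem (i := 2) (j := 2) L.mul hu3 hv3))))
      · have hu' : u ∈ pchain p L.mul 4 := by rw [heq]; exact hu
        exact pmul_mem (i := 3) (j := 0) L.mul hu' hv
    have le56 : pchain p L.mul 5 ≤ pchain p L.mul 6 := by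
      rw [pchain_five, Submodule.span_le]
      rintro y ⟨j, u, hu, v, hv, rfl⟩
      rcases j with ⟨jv, hj⟩
      interval_cases jv
      · exact pmul_mem (i := 0) (j := 4) L.mul hu (le45 hv)
      · have hv' : v ∈ pchain p L.mul 4 := by rw [heq]; exact hv
        exact pmul_mem (i := 1) (j := 3) L.mul hu hv'
      · have hu' : u ∈ pchain p L.mul 4 := by rw [heq]; exact hu
        exact pmul_mem (i := 3) (j := 1) L.mul hu' hv
      · exact pmul_mem (i := 4) (j := 0) L.mul (le45 hu) hv
    exact h4 (le_bot_iff.1 (le45.trans (le56.trans h6.le)))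
  -- dimension bookkeeping
  haveI : Finite A := Nat.finite_of_card_ne_zero (by rw [hcard]; exact pow_ne_zero _ hp.pos.ne')
  haveI := Fintype.ofFinite A
  have hrank : Module.finrank (ZMod p) A = 4 := by
    have hcc := Module.card_eq_pow_finrank (K := ZMod p) (V := A)
    rw [ZMod.card, ← Nat.card_eq_fintype_card, hcard] at hcc
    exact (Nat.pow_right_injective hp.two_le hcc.symm)
  have lt2 : pchain p L.mul 2 < ⊤ := lt_top_iff_ne_top.2 h2top
  have lt3 : pchain p L.mul 3 < pchain p L.mul 2 :=
    lt_of_le_of_ne (pchain_succ_le L.mul 2) hne32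
  have lt4 : pchain p L.mul 4 < pchain p L.mul 3 :=
    lt_of_le_of_ne (pchain_succ_le L.mul 3) hne43
  have q1 : Module.finrank (ZMod p) (pchain p L.mul 2) < 4 := by
    have h := Submodule.finrank_lt_finrank_of_lt lt2
    rwa [finrank_top, hrank] at h
  have q2 := Submodule.finrank_lt_finrank_of_lt lt3
  have q3 := Submodule.finrank_lt_finrank_of_lt lt4
  have r4 : Module.finrank (ZMod p) (pchain p L.mul 4) ≤ 1 := by omega
  by_cases h5 : pchain p L.mul 5 = ⊥
  · refine ⟨?_, ?_, ?_, ?_⟩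
    · intro u hu v hv
      have := pmul_mem (i := 2) (j := 1) L.mul hu hv
      rw [h5, Submodule.mem_bot] at this
      exact this
    · intro u hu v
      have := pmul_mem (i := 3) (j := 0) L.mul hu (mem_pchain_one L.mul v)
      rw [h5, Submodule.mem_bot] at this
      exact this
    · intro u v hv
      have := pmul_mem (i := 0) (j := 3) L.mul (mem_pchain_one L.mul u) hv
      rw [h5, Submodule.mem_bot] at this
      exact this
    · have := pmul_mem (i := 1) (j := 2) L.mul hx2 ha3
      rw [h5, Submodule.mem_bot] at this
      exact this
  · -- A⁵ = A⁴ case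
    have hr5 : 1 ≤ Module.finrank (ZMod p) (pchain p L.mul 5) := by
      haveI : Nontrivial (pchain p L.mul 5) := Submodule.nontrivial_iff_ne_bot.2 h5
      exact Module.finrank_pos
    have heq45 : pchain p L.mul 5 = pchain p L.mul 4 :=
      Submodule.eq_of_le_of_finrank_le (pchain_succ_le L.mul 4) (le_trans r4 hr5)
    have G2 : ∀ u ∈ pchain p L.mul 4, ∀ v : A, L.mul u v = 0 := by
      intro u hu v
      rw [← heq45] at hu
      exact z6 (pmul_mem (i := 4) (j := 0) L.mul hu (mem_pchain_one L.mul v))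
    have G3 : ∀ u : A, ∀ v ∈ pchain p L.mul 4, L.mul u v = 0 := by
      intro u v hv
      rw [← heq45] at hv
      exact z6 (pmul_mem (i := 0) (j := 4) L.mul (mem_pchain_one L.mul u) hv)
    have K1 : ∀ t ∈ pchain p L.mul 3, L.mul t (L.mul x x) = 0 := by
      intro t ht
      have htx : L.mul t x ∈ pchain p L.mul 4 :=
        pmul_mem (i := 2) (j := 0) L.mul ht (mem_pchain_one L.mul x)
      have hxt : L.mul x t ∈ pchain p L.mul 4 :=
        pmul_mem (i := 0) (j := 2) L.mul (mem_pchain_one L.mul x) ht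
      have e := L.prelie x t x
      rw [G2 _ hxt x, G3 x _ htx, G2 _ htx x] at e
      simpa using e.symm
    have G1 : ∀ u ∈ pchain p L.mul 3, ∀ v ∈ pchain p L.mul 2, L.mul u v = 0 := by
      intro u hu v hv
      obtain ⟨s, c, hc3, rfl⟩ := D2 v hv
      rw [L.mul_add, L.mul_smul, K1 u hu, smul_zero, zero_add]
      exact z6 (pmul_mem (i := 2) (j := 2) L.mul hu hc3)
    have G4 : L.mul (L.mul x x) (L.mul x (L.mul x x)) = 0 := by
      have e := L.prelie (L.mul x x) x (L.mul x x)
      have h3 : L.mul x (L.mul (L.mul x x) (L.mul x x)) = 0 :=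
        G3 x _ (pmul_mem (i := 1) (j := 1) L.mul hx2 hx2)
      rw [G1 _ hb3 _ hx2, G1 _ ha3 _ hx2, h3] at e
      simpa using e
    exact ⟨G1, G2, G3, G4⟩
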